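/- Let ℓ be a nonzero integer such that r_1^ℓ, ..., r_m^ℓ are pairwise distinct. For k ∈ {1, ..., m} define e_{m+1−k}(ℓ) = ∑_{1 ≤ i_1 < i_2 < ⋯ < i_k ≤ m} (−1)^{k+1} (r_{i_1} r_{i_2} ⋯ r_{i_k})^ℓ. Then for every integer q, s_{mℓ+q} = e_m(ℓ)·s_{(m−1)ℓ+q} + e_{m−1}(ℓ)·s_{(m−2)ℓ+q} + ⋯ + e_2(ℓ)·s_{ℓ+q} + e_1(ℓ)·s_q. -/

import Mathlib

open Polynomial

lemma coeff_aux (m : ℕ) (y : Fin m → ℂ) (j : ℕ) (hj : j ≤ m) :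
    (∏ k : Fin m, (X - C (y k))).coeff j =
      (-1:ℂ)^(m-j) * ∑ T ∈ Finset.powersetCard (m - j) (Finset.univ : Finset (Fin m)),
        ∏ i ∈ T, y i := by
  have h : (∏ k : Fin m, (X - C (y k))) = ∏ k : Fin m, (X + C (-(y k))) := by
    simp [sub_eq_add_neg]
  rw [h, Finset.prod_X_add_C_coeff _ _ (by simpa using hj)]
  simp only [Finset.card_univ, Fintype.card_fin]
  rw [Finset.mul_sum]
  apply Finset.sum_congr rfl
  intro T hT
  have hcard : T.card = m - j := (Finset.mem_powersetCard.mp hT).2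
  calc ∏ i ∈ T, -y i = ∏ i ∈ T, ((-1) * y i) := by simp
    _ = (-1:ℂ)^(m-j) * ∏ i ∈ T, y i := by rw [Finset.prod_mul_distrib, Finset.prod_const, hcard]

lemma vieta_eval (m : ℕ) (y : Fin m → ℂ) (i : Fin m) :
    y i ^ m = ∑ j : Fin m, ((-1:ℂ) ^ (m - (j:ℕ) + 1) *
      ∑ T ∈ Finset.powersetCard (m - (j:ℕ)) (Finset.univ : Finset (Fin m)),
        ∏ k ∈ T, y k) * y i ^ (j:ℕ) := by
  set P : ℂ[X] := ∏ k : Fin m, (X - C (y k)) with hP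
  have hmonic : P.Monic := monic_prod_of_monic _ _ fun k _ => monic_X_sub_C _
  have hdeg : P.natDegree = m := by
    rw [hP, natDegree_prod_of_monic _ _ fun k _ => monic_X_sub_C _]
    simp
  have h0 : P.eval (y i) = 0 := by
    rw [hP, eval_prod]
    exact Finset.prod_eq_zero (Finset.mem_univ i) (by simp)
  rw [eval_eq_sum_range, hdeg, Finset.sum_range_succ] at h0
  have hlead : P.coeff m = 1 := by
    have := hmonic.coeff_natDegree
    rwa [hdeg] at this
  rw [hlead, one_mul] at h0
  have h1 : y i ^ m = ∑ j ∈ Finset.range m, (-(P.coeff j)) * y i ^ j := by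
    have : y i ^ m = -∑ x ∈ Finset.range m, P.coeff x * y i ^ x := by linear_combination h0
    rw [this, ← Finset.sum_neg_distrib]
    apply Finset.sum_congr rfl; intro j _; ring
  rw [h1, ← Fin.sum_univ_eq_sum_range (fun j => (-(P.coeff j)) * y i ^ j) m]
  apply Finset.sum_congr rfl
  intro j _
  congr 1
  rw [coeff_aux m y j (le_of_lt j.isLt)]
  rw [pow_succ]
  ring


lemma binet (m : ℕ) (hm : 2 ≤ m) (a : Fin m → ℂ) (ha1 : a ⟨0, Nat.lt_of_lt_of_le (by norm_num) hm⟩ ≠ 0)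
    (s : ℤ → ℂ) (hrec : ∀ k : ℤ, s (k + m) = ∑ i : Fin m, a i * s (k + (i : ℕ)))
    (rt : Fin m → ℂ) (hroot : ∀ i, rt i ^ m = ∑ j : Fin m, a j * rt i ^ (j : ℕ))
    (hrt : Function.Injective rt) (hrt0 : ∀ j, rt j ≠ 0) :
    ∃ c : Fin m → ℂ, ∀ n : ℤ, s n = ∑ j : Fin m, c j * rt j ^ n := by
  classical
  set A : Matrix (Fin m) (Fin m) ℂ := (Matrix.vandermonde rt).transpose with hA
  have hdet : A.det ≠ 0 := by
    rw [hA, Matrix.det_transpose, Matrix.det_vandermonde]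
    apply Finset.prod_ne_zero_iff.mpr
    intro i _
    apply Finset.prod_ne_zero_iff.mpr
    intro j hj
    have : i < j := Finset.mem_Ioi.mp hj
    exact sub_ne_zero_of_ne fun h => (ne_of_lt this) (hrt h).symm
  set c : Fin m → ℂ := A⁻¹.mulVec (fun i : Fin m => s ((i : ℕ) : ℤ)) with hc
  have hAc : A.mulVec c = fun i : Fin m => s ((i : ℕ) : ℤ) := by
    rw [hc, Matrix.mulVec_mulVec, Matrix.mul_nonsing_inv _ (isUnit_iff_ne_zero.mpr hdet), Matrix.one_mulVec]
  set t : ℤ → ℂ := fun n => ∑ j : Fin m, c j * rt j ^ n with ht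
  have hinit : ∀ i : Fin m, s ((i : ℕ) : ℤ) = t ((i : ℕ) : ℤ) := by
    intro i
    have := congrFun hAc i
    simp only [Matrix.mulVec, dotProduct, hA, Matrix.transpose_apply,
      Matrix.vandermonde] at this
    rw [← this, ht]
    apply Finset.sum_congr rfl
    intro j _
    rw [zpow_natCast, mul_comm]
    rfl
  have htrec : ∀ k : ℤ, t (k + m) = ∑ i : Fin m, a i * t (k + (i : ℕ)) := by
    intro k
    rw [ht]
    simp only
    calc ∑ j : Fin m, c j * rt j ^ (k + (m:ℤ))
        = ∑ j : Fin m, ∑ i : Fin m, c j * (rt j ^ k * (a i * rt j ^ (i:ℕ))) := by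
          apply Finset.sum_congr rfl; intro j _
          rw [zpow_add₀ (hrt0 j), zpow_natCast, hroot j, Finset.mul_sum, Finset.mul_sum]
      _ = ∑ i : Fin m, a i * ∑ j : Fin m, c j * rt j ^ (k + ((i:ℕ):ℤ)) := by
          rw [Finset.sum_comm]
          apply Finset.sum_congr rfl; intro i _
          rw [Finset.mul_sum]
          apply Finset.sum_congr rfl; intro j _
          rw [zpow_add₀ (hrt0 j), zpow_natCast]
          ring
  refine ⟨c, ?_⟩
  set u : ℤ → ℂ := fun n => s n - t n with hu'
  have hu : ∀ k : ℤ, u (k + m) = ∑ i : Fin m, a i * u (k + (i : ℕ)) := by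
    intro k
    simp only [hu']
    rw [hrec k, htrec k, ← Finset.sum_sub_distrib]
    apply Finset.sum_congr rfl; intro i _; ring
  have key : ∀ n : ℤ, ∀ j : Fin m, u (n + (j : ℕ)) = 0 := by
    intro n
    induction n using Int.induction_on with
    | zero =>
      intro j
      have := hinit j
      simp only [hu', zero_add]
      rw [this, sub_self]
    | succ n ih =>
      intro j
      by_cases hj : (j : ℕ) + 1 < m
      · have he : ((n:ℤ) + 1 + (j:ℕ)) = (n:ℤ) + (((j:ℕ) + 1 : ℕ) : ℤ) := by push_cast; ring
        rw [he]
        exact ih ⟨(j:ℕ) + 1, hj⟩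
      · have hj' : (j : ℕ) + 1 = m := by have := j.isLt; omega
        have he : ((n:ℤ) + 1 + (j:ℕ)) = (n:ℤ) + (m:ℤ) := by omega
        rw [he, hu]
        apply Finset.sum_eq_zero
        intro i _
        rw [ih i, mul_zero]
    | pred n ih =>
      intro j
      by_cases hj : (j : ℕ) = 0
      · have hm1 : u (-(n:ℤ) - 1 + (m:ℤ)) = 0 := by
          have he : (-(n:ℤ) - 1 + (m:ℤ)) = -(n:ℤ) + ((m - 1 : ℕ) : ℤ) := by
            have : ((m - 1 : ℕ) : ℤ) = (m:ℤ) - 1 := by omega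
            rw [this]; ring
          rw [he]
          exact ih ⟨m - 1, by omega⟩
        have h2 := hu (-(n:ℤ) - 1)
        rw [hm1] at h2
        have h3 : ∑ i : Fin m, a i * u (-(n:ℤ) - 1 + (i:ℕ)) =
            a ⟨0, by omega⟩ * u (-(n:ℤ) - 1 + ((0:ℕ):ℤ)) := by
          apply Finset.sum_eq_single_of_mem _ (Finset.mem_univ _)
          intro i _ hi
          have hi1 : 1 ≤ (i : ℕ) := by
            rcases Nat.eq_zero_or_pos (i : ℕ) with h | h
            · exact absurd (Fin.ext h : i = ⟨0, by omega⟩) hi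
            · exact h
          have he : (-(n:ℤ) - 1 + (i:ℕ)) = -(n:ℤ) + (((i:ℕ) - 1 : ℕ) : ℤ) := by
            have : (((i:ℕ) - 1 : ℕ) : ℤ) = ((i:ℕ):ℤ) - 1 := by omega
            rw [this]; ring
          rw [he, ih ⟨(i:ℕ) - 1, by have := i.isLt; omega⟩, mul_zero]
        rw [h3] at h2
        have h4 : u (-(n:ℤ) - 1 + ((0:ℕ):ℤ)) = 0 := by
          rcases mul_eq_zero.mp h2.symm with h | h
          · exact absurd h ha1
          · exact h
        have : (-(n:ℤ) - 1 + (j:ℕ)) = (-(n:ℤ) - 1 + ((0:ℕ):ℤ)) := by rw [hj]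
        rw [this]
        exact h4
      · have hj1 : 1 ≤ (j : ℕ) := Nat.one_le_iff_ne_zero.mpr hj
        have he : (-(n:ℤ) - 1 + (j:ℕ)) = -(n:ℤ) + (((j:ℕ) - 1 : ℕ) : ℤ) := by
          have : (((j:ℕ) - 1 : ℕ) : ℤ) = ((j:ℕ):ℤ) - 1 := by omega
          rw [this]; ring
        rw [he]
        exact ih ⟨(j:ℕ) - 1, by have := j.isLt; omega⟩
  intro n
  have := key n ⟨0, by omega⟩
  simp only [hu'] at this
  have hn0 : (n + ((0:ℕ):ℤ)) = n := by simp
  rw [hn0] at this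
  have := sub_eq_zero.mp this
  rw [this, ht]




/-- Lemma 2.5 of the paper. Let `ℓ ≠ 0` be an integer with
`rt 0 ^ ℓ, …, rt (m-1) ^ ℓ` pairwise distinct. With
`e_{m+1-k}(ℓ) = ∑_{1 ≤ i₁ < ⋯ < i_k ≤ m} (−1)^{k+1} (r_{i₁}⋯r_{i_k})^ℓ`, one has, for every
integer `q`, `s_{mℓ+q} = ∑_{j=1}^{m} e_j(ℓ)·s_{(j−1)ℓ+q}`. Here the summation index
`j : Fin m` corresponds to the coefficient `e_{j+1}(ℓ)` (so `k = m − j`) multiplying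
`s_{jℓ+q}`. -/
theorem stmt_5 (m : ℕ) (hm : 2 ≤ m) (a : Fin m → ℂ)
    (ha1 : a ⟨0, by omega⟩ ≠ 0)
    (s : ℤ → ℂ)
    (hrec : ∀ k : ℤ, s (k + m) = ∑ i : Fin m, a i * s (k + (i : ℕ)))
    (hmin : ∀ d : ℕ, d < m → ∀ b : Fin d → ℂ,
      ¬ (∀ k : ℤ, s (k + d) = ∑ i : Fin d, b i * s (k + (i : ℕ))))
    (hs : ∃ i ∈ Finset.Icc (1 : ℤ) (m : ℤ), s i ≠ 0)
    (rt : Fin m → ℂ)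
    (hroot : ∀ i, rt i ^ m = ∑ j : Fin m, a j * rt i ^ (j : ℕ))
    (hrt : Function.Injective rt)
    (ℓ : ℤ) (hℓ : ℓ ≠ 0)
    (hdist : ∀ i j : Fin m, rt i ^ ℓ = rt j ^ ℓ → i = j) :
    ∀ q : ℤ, s ((m : ℤ) * ℓ + q) =
      ∑ j : Fin m,
        ((-1 : ℂ) ^ (m - (j : ℕ) + 1) *
          ∑ T ∈ Finset.powersetCard (m - (j : ℕ)) (Finset.univ : Finset (Fin m)),
            (∏ i ∈ T, rt i) ^ ℓ) * s (((j : ℕ) : ℤ) * ℓ + q) := by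
  intro q
  have hrt0 : ∀ j : Fin m, rt j ≠ 0 := by
    intro j hj0
    have h := hroot j
    rw [hj0, zero_pow (by omega : m ≠ 0)] at h
    have h2 : ∑ i : Fin m, a i * (0:ℂ) ^ (i:ℕ) = a ⟨0, by omega⟩ * (0:ℂ) ^ ((⟨0, by omega⟩ : Fin m):ℕ) := by
      apply Finset.sum_eq_single_of_mem _ (Finset.mem_univ _)
      intro i _ hi
      have : (i:ℕ) ≠ 0 := fun h0 => hi (Fin.ext h0)
      rw [zero_pow this, mul_zero]
    rw [h2] at h
    simp at h
    exact ha1 h.symm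
  obtain ⟨c, hc⟩ := binet m hm a ha1 s hrec rt hroot hrt hrt0
  have hy : ∀ (T : Finset (Fin m)), (∏ i ∈ T, rt i) ^ ℓ = ∏ i ∈ T, rt i ^ ℓ :=
    fun T => (Finset.prod_zpow _ _ _).symm
  simp only [hc, hy]
  have hswap : ∀ (K : Fin m → ℂ) (f : Fin m → Fin m → ℂ),
      ∑ j : Fin m, K j * ∑ i : Fin m, f j i = ∑ i : Fin m, ∑ j : Fin m, K j * f j i := by
    intro K f
    simp_rw [Finset.mul_sum]
    exact Finset.sum_comm
  rw [hswap (fun j : Fin m => ((-1 : ℂ) ^ (m - (j : ℕ) + 1) *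
        ∑ T ∈ Finset.powersetCard (m - (j : ℕ)) (Finset.univ : Finset (Fin m)),
          ∏ i ∈ T, rt i ^ ℓ))
      (fun j i => c i * rt i ^ (((j:ℕ):ℤ) * ℓ + q))]
  apply Finset.sum_congr rfl
  intro i _
  have e1 : rt i ^ ((m:ℤ)*ℓ+q) = (rt i ^ ℓ)^m * rt i ^ q := by
    rw [zpow_add₀ (hrt0 i), mul_comm (m:ℤ) ℓ, zpow_mul, zpow_natCast]
  have e2 : ∀ j : Fin m, rt i ^ (((j:ℕ):ℤ)*ℓ+q) = (rt i ^ ℓ)^(j:ℕ) * rt i ^ q := by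
    intro j
    rw [zpow_add₀ (hrt0 i), mul_comm ((j:ℕ):ℤ) ℓ, zpow_mul, zpow_natCast]
  have hv := vieta_eval m (fun k => rt k ^ ℓ) i
  rw [e1, hv, Finset.sum_mul, Finset.mul_sum]
  apply Finset.sum_congr rfl
  intro j _
  rw [e2 j]
  ring
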